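/- For n ≥ 5, the metric dimension of the inclusion graph on nonempty proper subsets of {1,...,n} is at least n. -/

import Mathlib

open SimpleGraph Finset

variable {V : Type*}

/-- A set of vertices is resolving if distance vectors to it distinguish vertices. -/
def IsResolving (G : SimpleGraph V) (S : Set V) : Prop :=
  ∀ u v : V, (∀ w ∈ S, G.dist u w = G.dist v w) → u = v

/-- The metric dimension: the least size of a (finite) resolving set. -/
noncomputable def metricDim (G : SimpleGraph V) : ℕ :=
  sInf {k | ∃ S : Finset V, S.card = k ∧ IsResolving G ↑S}

/-- Two vertices are mutually maximally distant. -/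
def MMD (G : SimpleGraph V) (u v : V) : Prop :=
  u ≠ v ∧ (∀ w, G.Adj u w → G.dist v w ≤ G.dist u v) ∧
    (∀ w, G.Adj v w → G.dist u w ≤ G.dist u v)

/-- The strong resolving graph: edges between mutually maximally distant vertices. -/
def strongResolvingGraph (G : SimpleGraph V) : SimpleGraph V where
  Adj u v := MMD G u v
  symm := by
    constructor
    rintro u v ⟨hne, h1, h2⟩
    refine ⟨hne.symm, ?_, ?_⟩
    · intro w hw
      rw [SimpleGraph.dist_comm (u := v) (v := u)]
      exact h2 w hw
    · intro w hw
      rw [SimpleGraph.dist_comm (u := v) (v := u)]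
      exact h1 w hw
  loopless := ⟨fun v h => h.1 rfl⟩

/-- A set strongly resolving a graph. -/
def IsStrongResolving (G : SimpleGraph V) (S : Set V) : Prop :=
  ∀ u v : V, u ≠ v → ∃ w ∈ S,
    G.dist w u = G.dist w v + G.dist v u ∨ G.dist w v = G.dist w u + G.dist u v

/-- Strong metric dimension. -/
noncomputable def sdim (G : SimpleGraph V) : ℕ :=
  sInf {k | ∃ S : Finset V, S.card = k ∧ IsStrongResolving G ↑S}

/-- An independent set of vertices. -/
def IsIndepFinset (G : SimpleGraph V) (S : Finset V) : Prop :=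
  ∀ u ∈ S, ∀ v ∈ S, u ≠ v → ¬ G.Adj u v

/-- Independence number. -/
noncomputable def indepNum (G : SimpleGraph V) : ℕ :=
  sSup {k | ∃ S : Finset V, S.card = k ∧ IsIndepFinset G S}

/-- Vertices of the inclusion graph on `{1,...,n}`: nonempty proper subsets. -/
def SubVert (n : ℕ) := {A : Finset (Fin n) // A.Nonempty ∧ A ≠ Finset.univ}

/-- The inclusion graph on nonempty proper subsets of `{1,...,n}`. -/
def inclGraph (n : ℕ) : SimpleGraph (SubVert n) where
  Adj A B := A.1 ⊂ B.1 ∨ B.1 ⊂ A.1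
  symm := ⟨fun _ _ h => h.symm⟩
  loopless := ⟨fun A h => by
    rcases h with h | h <;> exact (ssubset_irrefl A.1) h⟩

/-- Complement of a vertex of the inclusion graph. -/
def complVert {n : ℕ} (A : SubVert n) : SubVert n :=
  ⟨A.1ᶜ,
    Finset.nonempty_iff_ne_empty.mpr fun h => A.2.2 (by simpa using h),
    fun h => (Finset.nonempty_iff_ne_empty.mp A.2.1) (by simpa using h)⟩

/-- Vertices of the inclusion ideal graph of a product of chain rings:
tuples in a product of chains, excluding bottom and top. -/
def ChainVert {m : ℕ} (d : Fin m → ℕ) := {v : ∀ i, Fin (d i + 2) // v ≠ ⊥ ∧ v ≠ ⊤}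

/-- The inclusion graph on a product of chains (minus bottom and top),
modelling the inclusion ideal graph of a product of principal ideal rings. -/
def chainGraph {m : ℕ} (d : Fin m → ℕ) : SimpleGraph (ChainVert d) where
  Adj I J := I.1 < J.1 ∨ J.1 < I.1
  symm := ⟨fun _ _ h => h.symm⟩
  loopless := ⟨fun I h => by rcases h with h | h <;> exact lt_irrefl _ h⟩

/-!
In the inclusion graph two distinct sets are at distance `1` or `2` unless they are complements
of each other: incomparable sets meet in a common lower neighbour `A ∩ B`, or, if disjoint
but not complementary, have the common upper neighbour `A ∪ B`. For a resolving set `S`, the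
vertices that are neither in `S` nor complements of members of `S` therefore have distinct
`{1, 2}`-valued distance vectors to `S`, so there are at most `2 ^ #S` of them. Hence
`2 ^ n - 2 ≤ 2 * #S + 2 ^ #S`, which forces `#S ≥ n` as soon as `n ≥ 5`.
-/

namespace SimpleGraph

variable {V : Type*} {G : SimpleGraph V}

lemma isResolving_univ_of_preconnected (hG : G.Preconnected) : IsResolving G Set.univ :=
  fun u v h => ((hG v u).dist_eq_zero_iff.mp ((h u trivial).symm.trans SimpleGraph.dist_self)).symm

lemma le_metricDim [Fintype V] {k : ℕ} (hG : G.Preconnected)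
    (h : ∀ S : Finset V, IsResolving G S → k ≤ #S) : k ≤ metricDim G :=
  le_csInf ⟨_, univ, rfl, by simpa using isResolving_univ_of_preconnected hG⟩
    fun _ ⟨S, hSk, hS⟩ => hSk ▸ h S hS

/-- A resolving set `S` separates the vertices at distance `1` or `2` from all of `S` by the
set of their neighbours in `S`. -/
lemma IsResolving.card_le_two_pow {S T : Finset V} (hS : IsResolving G S)
    (hT : ∀ u ∈ T, ∀ w ∈ S, G.dist u w = 1 ∨ G.dist u w = 2) : #T ≤ 2 ^ #S := by
  rw [← card_powerset]
  refine card_le_card_of_injOn (fun u => S.filter (G.dist u · = 1))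
    (fun u _ => mem_powerset.mpr (filter_subset _ _)) fun u hu v hv huv => hS u v fun w hw => ?_
  have hiff : G.dist u w = 1 ↔ G.dist v w = 1 := by
    simpa only [mem_filter, mem_coe.mp hw, true_and] using Finset.ext_iff.mp huv w
  rcases hT u hu w hw with h | h <;> rcases hT v hv w hw with h' | h' <;> omega

end SimpleGraph

section InclGraph

variable {n : ℕ}

instance : Fintype (SubVert n) := Subtype.fintype _
instance : DecidableEq (SubVert n) := Subtype.instDecidableEq

lemma card_subVert_add_two (hn : 0 < n) : Fintype.card (SubVert n) + 2 = 2 ^ n := by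
  have hfilter :
      univ.filter (fun A : Finset (Fin n) => ¬(A.Nonempty ∧ A ≠ univ)) = {∅, univ} := by
    ext A
    simp [or_iff_not_imp_left, nonempty_iff_ne_empty]
  have hempty : (∅ : Finset (Fin n)) ≠ univ :=
    (univ_nonempty_iff.mpr ⟨⟨0, hn⟩⟩).ne_empty.symm
  change Fintype.card {A : Finset (Fin n) // A.Nonempty ∧ A ≠ univ} + 2 = 2 ^ n
  have hsplit := card_filter_add_card_filter_not (s := univ)
    fun A : Finset (Fin n) => A.Nonempty ∧ A ≠ univ
  rwa [hfilter, card_pair hempty, card_univ, Fintype.card_finset, Fintype.card_fin,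
    ← Fintype.card_subtype] at hsplit

@[simp]
lemma complVert_complVert (A : SubVert n) : complVert (complVert A) = A :=
  Subtype.ext (compl_compl A.1)

lemma complVert_injective : Function.Injective (complVert : SubVert n → SubVert n) :=
  Function.LeftInverse.injective complVert_complVert

/-- Two incomparable, non-complementary vertices have the common neighbour `A ∩ B`, or `A ∪ B`
when they are disjoint. -/
lemma inclGraph_exists_common_adj {A B : SubVert n} (hAB : A ≠ B)
    (hadj : ¬(inclGraph n).Adj A B) (hc : B ≠ complVert A) :
    ∃ C, (inclGraph n).Adj A C ∧ (inclGraph n).Adj C B := by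
  have hne : A.1 ≠ B.1 := Subtype.coe_injective.ne hAB
  have hAB' : ¬A.1 ⊆ B.1 := fun h => hadj (Or.inl (h.ssubset_of_ne hne))
  have hBA' : ¬B.1 ⊆ A.1 := fun h => hadj (Or.inr (h.ssubset_of_ne hne.symm))
  by_cases hdisj : Disjoint A.1 B.1
  · have hunion : A.1 ∪ B.1 ≠ univ := fun h =>
      hc (Subtype.ext (isCompl_iff.mpr ⟨hdisj, codisjoint_iff.mpr h⟩).compl_eq.symm)
    exact ⟨⟨A.1 ∪ B.1, A.2.1.mono subset_union_left, hunion⟩,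
      Or.inl (left_lt_sup.mpr hBA'), Or.inr (right_lt_sup.mpr hAB')⟩
  · exact ⟨⟨A.1 ∩ B.1, not_disjoint_iff_nonempty_inter.mp hdisj,
        ne_top_of_le_ne_top A.2.2 inter_subset_left⟩,
      Or.inr (inf_lt_left.mpr hAB'), Or.inl (inf_lt_right.mpr hBA')⟩

lemma inclGraph_exists_walk_length_le_two {A B : SubVert n} (hc : B ≠ complVert A) :
    ∃ p : (inclGraph n).Walk A B, p.length ≤ 2 := by
  by_cases hAB : A = B
  · subst hAB
    exact ⟨.nil, by simp⟩
  by_cases hadj : (inclGraph n).Adj A B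
  · exact ⟨hadj.toWalk, by simp⟩
  obtain ⟨C, hAC, hCB⟩ := inclGraph_exists_common_adj hAB hadj hc
  exact ⟨.cons hAC hCB.toWalk, by simp⟩

lemma inclGraph_dist_eq_one_or_two {A B : SubVert n} (hAB : A ≠ B) (hc : B ≠ complVert A) :
    (inclGraph n).dist A B = 1 ∨ (inclGraph n).dist A B = 2 := by
  obtain ⟨p, hp⟩ := inclGraph_exists_walk_length_le_two hc
  have hpos := Reachable.pos_dist_of_ne ⟨p⟩ hAB
  have hle := dist_le p
  omega

/-- A vertex and its complement are joined through any third vertex. -/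
lemma inclGraph_preconnected (hn : 3 ≤ n) : (inclGraph n).Preconnected := by
  intro A B
  by_cases hc : B = complVert A
  · have hcard : #{A, complVert A} < #(univ : Finset (SubVert n)) := by
      have := card_subVert_add_two (n := n) (by omega)
      have : 2 ^ 3 ≤ 2 ^ n := Nat.pow_le_pow_right two_pos hn
      exact card_le_two.trans_lt (by rw [card_univ]; omega)
    obtain ⟨C, -, hC⟩ := exists_mem_notMem_of_card_lt_card hcard
    simp only [mem_insert, mem_singleton, not_or] at hC
    obtain ⟨p, -⟩ := inclGraph_exists_walk_length_le_two (A := A) (B := C) hC.2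
    obtain ⟨q, -⟩ := inclGraph_exists_walk_length_le_two (A := C) (B := B)
      (by rw [hc]; exact fun h => hC.1 (complVert_injective h).symm)
    exact ⟨p.append q⟩
  · obtain ⟨p, -⟩ := inclGraph_exists_walk_length_le_two hc
    exact ⟨p⟩

lemma card_le_of_isResolving_inclGraph {S : Finset (SubVert n)}
    (hS : IsResolving (inclGraph n) S) : Fintype.card (SubVert n) ≤ 2 * #S + 2 ^ #S := by
  set T := univ.filter fun u => u ∉ S ∧ complVert u ∉ S
  have hT : #T ≤ 2 ^ #S := hS.card_le_two_pow fun u hu w hw => by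
    obtain ⟨huS, hcS⟩ := (mem_filter.mp hu).2
    exact inclGraph_dist_eq_one_or_two (by rintro rfl; exact huS hw) (by rintro rfl; exact hcS hw)
  have hcover : (univ : Finset (SubVert n)) ⊆ S ∪ S.image complVert ∪ T := by
    intro u _
    by_cases huS : u ∈ S
    · simp [huS]
    by_cases hcS : complVert u ∈ S
    · exact mem_union_left _ <| mem_union_right _ <|
        mem_image.mpr ⟨_, hcS, complVert_complVert u⟩
    · simp [T, huS, hcS]
  calc Fintype.card (SubVert n) ≤ #(S ∪ S.image complVert ∪ T) := card_le_card hcover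
    _ ≤ #S + #(S.image complVert) + #T := by grw [card_union_le, card_union_le]
    _ ≤ 2 * #S + 2 ^ #S := by grw [card_image_le, hT, two_mul]

end InclGraph

lemma two_mul_add_two_lt_two_pow {m : ℕ} (hm : 4 ≤ m) : 2 * m + 2 < 2 ^ m := by
  induction m, hm using Nat.le_induction with
  | base => norm_num
  | succ m _ ih => rw [pow_succ]; omega

lemma le_card_of_isResolving_inclGraph {n : ℕ} (hn : 5 ≤ n) {S : Finset (SubVert n)}
    (hS : IsResolving (inclGraph n) S) : n ≤ #S := by
  by_contra! hSn
  have hcount := card_le_of_isResolving_inclGraph hS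
  have hcard := card_subVert_add_two (n := n) (by omega)
  have hpow : 2 ^ #S ≤ 2 ^ (n - 1) := Nat.pow_le_pow_right two_pos (by omega)
  have hsucc : 2 ^ n = 2 * 2 ^ (n - 1) := by rw [← pow_succ']; congr 1; omega
  have := two_mul_add_two_lt_two_pow (m := n - 1) (by omega)
  omega

theorem stmt6 (n : ℕ) (hn : 5 ≤ n) : n ≤ metricDim (inclGraph n) :=
  le_metricDim (inclGraph_preconnected (by omega)) fun _ => le_card_of_isResolving_inclGraph hn
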